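/- arXiv:1106.4927 — 2 statements merged into one kernel-verified Lean document; each statement's English description precedes it below -/
import Mathlib

section
/- Let P be a set of n > 2 points drawn independently and uniformly at random from a unit disk (a disk in ℝ² of area 1). Set α = (1 − e^{−1/16})(1 − e^{−1/32})e^{−1} and L = ln(α/ε) / ( n − 2 + ln(α/ε) ), and assume 0 < ε ≤ α/e² and that ρ₁ defined by V₂(ρ₁) = L satisfies V₂(ρ₁) ≤ 1/2 − 1/n. Then with probability at least ε there exist points a, b ∈ P forming a Delaunay edge with d(a,b) ≥ ( L / (2√π) )^{1/3}. -/
/-!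
Let `h` be the distance from the centre to the chord of length `ρ₁` in the unit disk `B` of
radius `r = 1/√π`, so that the cap `{p ∈ B | h ≤ p 0}` has area `L`, and let `W = √(r² - h²)` be
the half-chord.
Two congruent rectangles of area at least `L / 64` fit in the cap, one at ordinates
`[W/2, 3W/4]` and one at `[-3W/4, -W/2]`. When one sample lies in each rectangle and all others
lie outside the cap, some circle through the two samples bounds a disk inside the half-plane
`h ≤ p 0`, so they span a Delaunay edge, of length at least `W ≥ (L / (2√π))^{1/3}`. For the
`n (n - 1)` ordered pairs these events are disjoint and, by independence, each has probability
at least `(L/64)² (1 - L)^{n-2}`. With `t = log (α / ε)` we have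
`(1 - L)^{n-2} = (1 + t / (n - 2))^{-(n-2)} ≥ e^{-t} = ε / α`, and `n (n - 1) L² ≥ 4096 α`
because `L ≥ 2 / n`.
-/

noncomputable section

open MeasureTheory ProbabilityTheory Real

local notation "⟪" x ", " y "⟫" => @inner ℝ _ _ x y

/-- `a` and `b` form a Delaunay edge of the point set `P`: there is a disk `B'`
with `a` and `b` on its boundary circle and no point of `P` in its interior. -/
def IsDelaunayEdge {m : ℕ} (P : Set (EuclideanSpace ℝ (Fin m)))
    (a b : EuclideanSpace ℝ (Fin m)) : Prop :=
  ∃ (z : EuclideanSpace ℝ (Fin m)) (s : ℝ),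
    a ∈ Metric.sphere z s ∧ b ∈ Metric.sphere z s ∧ ∀ p ∈ P, p ∉ Metric.ball z s

/-- `V_m(x)`: the volume of the (smaller) cap of the ball of radius `R` centered at
the origin in `ℝ^m` whose base has diameter `x`. -/
def ballCapVol (m : ℕ) [NeZero m] (R x : ℝ) : ℝ :=
  (volume {p : EuclideanSpace ℝ (Fin m) | p ∈ Metric.closedBall 0 R ∧
      Real.sqrt (R ^ 2 - x ^ 2 / 4) ≤ ⟪EuclideanSpace.single (0 : Fin m) (1 : ℝ), p⟫}).toReal

open Set Metric
open scoped ENNReal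

local notation "ℝ²" => EuclideanSpace ℝ (Fin 2)

section Placement

open Finset

variable {α : Type*} {n : ℕ} {A B D : Set α}

def placement (A B D : Set α) (i j k : Fin n) : Set α :=
  if k = i then A else if k = j then B else D

lemma measurableSet_placement [MeasurableSpace α] (hA : MeasurableSet A) (hB : MeasurableSet B)
    (hD : MeasurableSet D) (i j k : Fin n) : MeasurableSet (placement A B D i j k) := by
  unfold placement
  split_ifs <;> assumption

lemma prod_placement {M : Type*} [CommMonoid M] (f : Set α → M) {i j : Fin n} (hij : i ≠ j) :
    ∏ k, f (placement A B D i j k) = f A * f B * f D ^ (n - 2) := by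
  have hj : j ∈ univ.erase i := mem_erase.2 ⟨hij.symm, mem_univ j⟩
  have hrest : ∀ k ∈ (univ.erase i).erase j, f (placement A B D i j k) = f D := fun k hk => by
    rw [placement, if_neg (ne_of_mem_erase (mem_of_mem_erase hk)), if_neg (ne_of_mem_erase hk)]
  rw [← mul_prod_erase _ _ (mem_univ i), ← mul_prod_erase _ _ hj, prod_congr rfl hrest,
    prod_const, card_erase_of_mem hj, card_erase_of_mem (mem_univ i), card_univ,
    Fintype.card_fin, Nat.sub_sub, mul_assoc]
  simp [placement, hij.symm]

variable {Ω : Type*} {X : Fin n → Ω → α}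

lemma pairwiseDisjoint_iInter_preimage_placement (hAB : Disjoint A B) (hAD : Disjoint A D)
    (hBD : Disjoint B D) :
    Set.PairwiseDisjoint (univ.offDiag : Finset (Fin n × Fin n))
      fun ij : Fin n × Fin n => ⋂ k, X k ⁻¹' placement A B D ij.1 ij.2 k := by
  rintro ⟨i, j⟩ hij ⟨i', j'⟩ hij' hne
  simp only [coe_offDiag, coe_univ, Set.mem_offDiag, Set.mem_univ, true_and] at hij hij'
  refine Set.disjoint_left.2 fun ω hω hω' => hne ?_
  simp only [Set.mem_iInter, Set.mem_preimage] at hω hω'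
  have hi := hω i
  have hj := hω j
  have hi' := hω' i
  have hj' := hω' j
  simp only [placement, if_neg hij.symm] at hi hj hi' hj'
  by_cases hii : i = i'
  · subst hii
    by_cases hjj : j = j'
    · rw [hjj]
    · simp only [if_neg hij.symm, if_neg hjj] at hj'
      exact absurd hj' (Set.disjoint_left.1 hBD hj)
  · simp only [if_neg hii] at hi'
    split_ifs at hi'
    · exact absurd hi' (Set.disjoint_left.1 hAB hi)
    · exact absurd hi' (Set.disjoint_left.1 hAD hi)

variable [MeasurableSpace Ω] [MeasurableSpace α] {μ : Measure Ω}

lemma measure_iInter_preimage_placement (hX : iIndepFun X μ) (hmeas : ∀ k, Measurable (X k))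
    {ν : Measure α} (hν : ∀ k, μ.map (X k) = ν) (hA : MeasurableSet A) (hB : MeasurableSet B)
    (hD : MeasurableSet D) {i j : Fin n} (hij : i ≠ j) :
    μ (⋂ k, X k ⁻¹' placement A B D i j k) = ν A * ν B * ν D ^ (n - 2) := by
  have hK := measurableSet_placement hA hB hD i j
  rw [hX.meas_iInter fun k => ⟨_, hK k, rfl⟩, ← prod_placement ν hij]
  refine prod_congr rfl fun k _ => ?_
  rw [← hν k, Measure.map_apply (hmeas k) (hK k)]

lemma card_offDiag_mul_le_measure (hX : iIndepFun X μ) (hmeas : ∀ k, Measurable (X k))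
    {ν : Measure α} (hν : ∀ k, μ.map (X k) = ν) (hA : MeasurableSet A) (hB : MeasurableSet B)
    (hD : MeasurableSet D) (hAB : Disjoint A B) (hAD : Disjoint A D) (hBD : Disjoint B D)
    {S : Set Ω} (hS : ∀ i j, i ≠ j → ⋂ k, X k ⁻¹' placement A B D i j k ⊆ S) :
    ((n * (n - 1) : ℕ) : ℝ≥0∞) * (ν A * ν B * ν D ^ (n - 2)) ≤ μ S := by
  have hF (ij : Fin n × Fin n) : MeasurableSet (⋂ k, X k ⁻¹' placement A B D ij.1 ij.2 k) :=
    .iInter fun k => hmeas k (measurableSet_placement hA hB hD _ _ k)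
  calc ((n * (n - 1) : ℕ) : ℝ≥0∞) * (ν A * ν B * ν D ^ (n - 2))
      = ∑ ij ∈ univ.offDiag, μ (⋂ k, X k ⁻¹' placement A B D ij.1 ij.2 k) := by
        rw [sum_congr rfl fun ij hij => measure_iInter_preimage_placement hX hmeas hν hA hB hD
          (mem_offDiag.1 hij).2.2, sum_const, offDiag_card, card_univ, Fintype.card_fin,
          ← Nat.mul_sub_one, nsmul_eq_mul]
    _ = μ (⋃ ij ∈ Finset.univ.offDiag, ⋂ k, X k ⁻¹' placement A B D ij.1 ij.2 k) :=
        (measure_biUnion_finset (pairwiseDisjoint_iInter_preimage_placement hAB hAD hBD)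
          fun ij _ => hF ij).symm
    _ ≤ μ S := measure_mono <| Set.iUnion₂_subset fun ij hij => hS _ _ (mem_offDiag.1 hij).2.2

end Placement

lemma EuclideanSpace.norm_sq_fin_two (p : ℝ²) : ‖p‖ ^ 2 = p 0 ^ 2 + p 1 ^ 2 := by
  simp [EuclideanSpace.real_norm_sq_eq, Fin.sum_univ_two]

lemma EuclideanSpace.dist_sq_fin_two (p q : ℝ²) :
    dist p q ^ 2 = (p 0 - q 0) ^ 2 + (p 1 - q 1) ^ 2 := by
  rw [dist_eq_norm, EuclideanSpace.norm_sq_fin_two]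
  rfl

lemma EuclideanSpace.mem_closedBall_zero_fin_two {r : ℝ} (hr : 0 ≤ r) {p : ℝ²} :
    p ∈ closedBall 0 r ↔ p 0 ^ 2 + p 1 ^ 2 ≤ r ^ 2 := by
  rw [mem_closedBall_zero_iff, ← EuclideanSpace.norm_sq_fin_two, sq_le_sq₀ (norm_nonneg p) hr]

lemma EuclideanSpace.abs_sub_apply_le_dist {ι : Type*} [Fintype ι] (p q : EuclideanSpace ℝ ι)
    (i : ι) : |p i - q i| ≤ dist p q :=
  (Real.dist_eq _ _).symm.trans_le (PiLp.dist_apply_le p q i)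

def coordRect (s t : Set ℝ) : Set ℝ² := {p | p 0 ∈ s ∧ p 1 ∈ t}

lemma measurableSet_coordRect {s t : Set ℝ} (hs : MeasurableSet s) (ht : MeasurableSet t) :
    MeasurableSet (coordRect s t) :=
  (measurableSet_preimage (EuclideanSpace.proj 0).continuous.measurable hs).inter
    (measurableSet_preimage (EuclideanSpace.proj 1).continuous.measurable ht)

lemma volume_coordRect (s t : Set ℝ) : volume (coordRect s t) = volume s * volume t := by
  have hpi : coordRect s t = (MeasurableEquiv.toLp 2 (Fin 2 → ℝ)).symm ⁻¹' pi univ ![s, t] := by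
    ext p
    simp [coordRect, Fin.forall_fin_two]
  rw [hpi,
    (EuclideanSpace.volume_preserving_symm_measurableEquiv_toLp (Fin 2)).measure_preimage_equiv,
    volume_pi_pi, Fin.prod_univ_two]
  rfl

lemma volume_coordRect_Icc {a b c d : ℝ} (hab : a ≤ b) :
    volume (coordRect (Icc a b) (Icc c d)) = ENNReal.ofReal ((b - a) * (d - c)) := by
  rw [volume_coordRect, Real.volume_Icc, Real.volume_Icc, ENNReal.ofReal_mul (sub_nonneg.2 hab)]

def cap (r h : ℝ) : Set ℝ² := {p | p ∈ closedBall 0 r ∧ h ≤ p 0}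

lemma measurableSet_cap (r h : ℝ) : MeasurableSet (cap r h) :=
  measurableSet_closedBall.inter
    (measurableSet_le measurable_const (EuclideanSpace.proj 0).continuous.measurable)

lemma ballCapVol_two_eq (r ρ : ℝ) :
    ballCapVol 2 r ρ = (volume (cap r √(r ^ 2 - ρ ^ 2 / 4))).toReal := by
  simp [ballCapVol, cap, EuclideanSpace.inner_single_left]

lemma cap_subset_coordRect {r h : ℝ} (hh : 0 ≤ h) :
    cap r h ⊆ coordRect (Icc h r) (Icc (-√(r ^ 2 - h ^ 2)) √(r ^ 2 - h ^ 2)) := by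
  rintro p ⟨hp, hhp⟩
  have hr : 0 ≤ r := le_trans (norm_nonneg p) (mem_closedBall_zero_iff.1 hp)
  rw [EuclideanSpace.mem_closedBall_zero_fin_two hr] at hp
  have hh2 : h ^ 2 ≤ p 0 ^ 2 := pow_le_pow_left₀ hh hhp 2
  refine ⟨⟨hhp, abs_le_of_sq_le_sq' (by nlinarith) hr |>.2⟩, ?_⟩
  exact abs_le.1 (Real.abs_le_sqrt (by linarith))

lemma toReal_volume_cap_le {r h : ℝ} (hh : 0 ≤ h) (hhr : h ≤ r) :
    (volume (cap r h)).toReal ≤ (r - h) * (2 * √(r ^ 2 - h ^ 2)) := by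
  have hle := measure_mono (μ := volume) (cap_subset_coordRect (r := r) hh)
  rw [volume_coordRect_Icc hhr, sub_neg_eq_add, ← two_mul] at hle
  exact ENNReal.toReal_le_of_le_ofReal (by positivity) hle

lemma coordRect_subset_cap {r h x₀ x₁ y₀ y₁ c : ℝ} (hr : 0 ≤ r) (hh : 0 ≤ h) (hx₀ : h ≤ x₀)
    (hy₀ : -c ≤ y₀) (hy₁ : y₁ ≤ c) (hcorner : x₁ ^ 2 + c ^ 2 ≤ r ^ 2) :
    coordRect (Icc x₀ x₁) (Icc y₀ y₁) ⊆ cap r h := by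
  rintro p ⟨⟨hp₀, hp₀'⟩, hp₁, hp₁'⟩
  refine ⟨(EuclideanSpace.mem_closedBall_zero_fin_two hr).2 ?_, hx₀.trans hp₀⟩
  have h₀ : p 0 ^ 2 ≤ x₁ ^ 2 := pow_le_pow_left₀ (by linarith) hp₀' 2
  have h₁ : p 1 ^ 2 ≤ c ^ 2 := sq_le_sq' (by linarith) (by linarith)
  linarith

lemma volume_closedBall_inv_sqrt_pi : volume (closedBall (0 : ℝ²) (1 / √π)) = 1 := by
  rw [EuclideanSpace.volume_closedBall_fin_two, ← ENNReal.ofReal_pow (by positivity),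
    ← ENNReal.ofReal_mul (by positivity), div_pow, one_pow, sq_sqrt pi_pos.le,
    one_div_mul_cancel pi_pos.ne', ENNReal.ofReal_one]

lemma volume_closedBall_inv_sqrt_pi_diff_cap (h : ℝ) :
    volume (closedBall (0 : ℝ²) (1 / √π) \ cap (1 / √π) h) =
      ENNReal.ofReal (1 - (volume (cap (1 / √π) h)).toReal) := by
  have hsub : cap (1 / √π) h ⊆ closedBall 0 (1 / √π) := fun p hp => hp.1
  have hfin : volume (cap (1 / √π) h) ≠ ⊤ :=
    ne_top_of_le_ne_top (volume_closedBall_inv_sqrt_pi ▸ ENNReal.one_ne_top) (measure_mono hsub)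
  rw [measure_sdiff hsub (measurableSet_cap _ _).nullMeasurableSet hfin,
    volume_closedBall_inv_sqrt_pi, ENNReal.ofReal_sub _ ENNReal.toReal_nonneg, ENNReal.ofReal_one,
    ENNReal.ofReal_toReal hfin]

lemma exists_center_of_mem_Icc {h u a₀ a₁ b₀ b₁ : ℝ} (hh : 0 ≤ h) (hu : 0 < u)
    (ha₀ : a₀ ∈ Icc (h + 5 * u) (h + 7 * u)) (hb₀ : b₀ ∈ Icc (h + 5 * u) (h + 7 * u))
    (hab : a₁ < b₁) (hgap : 7 * u * (h + 7 * u) ≤ (b₁ - a₁) ^ 2) :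
    ∃ c₀ c₁ : ℝ, (a₀ - c₀) ^ 2 + (a₁ - c₁) ^ 2 = (b₀ - c₀) ^ 2 + (b₁ - c₁) ^ 2 ∧
      (a₀ - c₀) ^ 2 + (a₁ - c₁) ^ 2 ≤ (c₀ - h) ^ 2 ∧ h ≤ c₀ := by
  obtain ⟨ha₀, ha₀'⟩ := ha₀
  obtain ⟨hb₀, hb₀'⟩ := hb₀
  set D := b₁ - a₁
  -- `T = D² / (4u)` is large enough for the disk to stay in `h ≤ p 0` (`hfar`) and small enough
  -- that `|b₀ - a₀| · 2T ≤ 2u · 2T = D²`, which puts `y` in `[0, D]`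
  set T := D ^ 2 / (4 * u)
  set y := (D ^ 2 - (b₀ - a₀) * (2 * T - a₀ - b₀)) / (2 * D)
  have hD : 0 < D := sub_pos.2 hab
  have hT : 4 * u * T = D ^ 2 := mul_div_cancel₀ _ (by positivity)
  have hT_ge : 7 * (h + 7 * u) ≤ 4 * T := le_of_mul_le_mul_left (by nlinarith) hu
  have hprod : |(b₀ - a₀) * (2 * T - a₀ - b₀)| ≤ D ^ 2 := by
    rw [abs_mul, abs_of_nonneg (by linarith : 0 ≤ 2 * T - a₀ - b₀), ← hT]
    have : |b₀ - a₀| ≤ 2 * u := abs_sub_le_iff.2 ⟨by linarith, by linarith⟩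
    nlinarith [abs_nonneg (b₀ - a₀)]
  have hy : 2 * D * y = D ^ 2 - (b₀ - a₀) * (2 * T - a₀ - b₀) :=
    mul_div_cancel₀ _ (by positivity)
  obtain ⟨hprod, hprod'⟩ := abs_le.1 hprod
  have hy₀ : 0 ≤ y := by nlinarith
  have hyD : y ≤ D := by nlinarith
  have hfar : (T - a₀) ^ 2 + D ^ 2 ≤ (T - h) ^ 2 := by nlinarith
  refine ⟨T, a₁ + y, ?_, ?_, by linarith⟩
  · linear_combination hy
  · nlinarith

lemma isDelaunayEdge_of_mem_Icc {P : Set ℝ²} {a b : ℝ²} {h u : ℝ} (hh : 0 ≤ h) (hu : 0 < u)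
    (ha : a 0 ∈ Icc (h + 5 * u) (h + 7 * u)) (hb : b 0 ∈ Icc (h + 5 * u) (h + 7 * u))
    (hab : a 1 < b 1) (hgap : 7 * u * (h + 7 * u) ≤ (b 1 - a 1) ^ 2)
    (hP : ∀ p ∈ P, p = a ∨ p = b ∨ p 0 < h) :
    IsDelaunayEdge P a b := by
  obtain ⟨c₀, c₁, hequi, hle, hhc⟩ := exists_center_of_mem_Icc hh hu ha hb hab hgap
  set z : ℝ² := !₂[c₀, c₁]
  have hdist (p : ℝ²) : dist p z ^ 2 = (p 0 - c₀) ^ 2 + (p 1 - c₁) ^ 2 :=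
    EuclideanSpace.dist_sq_fin_two p z
  have hbz : dist b z = dist a z := by
    rw [← sq_eq_sq₀ dist_nonneg dist_nonneg, hdist, hdist, hequi]
  have haz : dist a z ≤ c₀ - h := by
    rw [← sq_le_sq₀ dist_nonneg (by linarith), hdist]
    exact hle
  refine ⟨z, dist a z, mem_sphere.2 rfl, mem_sphere.2 hbz, fun p hp => ?_⟩
  rw [mem_ball, not_lt]
  rcases hP p hp with rfl | rfl | hp₀
  · exact le_rfl
  · exact hbz.ge
  · calc dist a z ≤ c₀ - h := haz
      _ ≤ c₀ - p 0 := by linarith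
      _ ≤ |p 0 - z 0| := by rw [abs_sub_comm]; exact le_abs_self _
      _ ≤ dist p z := EuclideanSpace.abs_sub_apply_le_dist p z 0

lemma isDelaunayEdge_range_of_mem_placement {n : ℕ} {x : Fin n → ℝ²} {r h u W : ℝ}
    (hh : 0 ≤ h) (hu : 0 < u) (hW : 0 < W) (hgap : 7 * u * (h + 7 * u) ≤ W ^ 2) {i j : Fin n}
    (hij : i ≠ j)
    (hx : ∀ k, x k ∈ placement
      (coordRect (Icc (h + 5 * u) (h + 7 * u)) (Icc (-(3 * W / 4)) (-(W / 2))))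
      (coordRect (Icc (h + 5 * u) (h + 7 * u)) (Icc (W / 2) (3 * W / 4)))
      (closedBall 0 r \ cap r h) i j k) :
    IsDelaunayEdge (range x) (x i) (x j) ∧ W ≤ dist (x i) (x j) := by
  have hi := hx i
  have hj := hx j
  simp only [placement, if_neg hij.symm] at hi hj
  have hWij : W ≤ x j 1 - x i 1 := by linarith [hi.2.2, hj.2.1]
  refine ⟨isDelaunayEdge_of_mem_Icc hh hu hi.1 hj.1 (by linarith) (by nlinarith) ?_, ?_⟩
  · rintro _ ⟨k, rfl⟩
    by_cases hki : k = i
    · exact Or.inl (by rw [hki])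
    by_cases hkj : k = j
    · exact Or.inr (Or.inl (by rw [hkj]))
    have hk := hx k
    simp only [placement, if_neg hki, if_neg hkj] at hk
    exact Or.inr (Or.inr (not_le.1 fun hle => hk.2 ⟨hk.1, hle⟩))
  · calc W ≤ |x i 1 - x j 1| := by rw [abs_sub_comm]; exact hWij.trans (le_abs_self _)
      _ ≤ dist (x i) (x j) := EuclideanSpace.abs_sub_apply_le_dist _ _ 1

lemma le_measure_exists_delaunayEdge_sqrt_le_dist {Ω : Type*} [MeasureSpace Ω] {n : ℕ}
    {X : Fin n → Ω → ℝ²} (hmeas : ∀ k, Measurable (X k)) (hX : iIndepFun X ℙ) {r h : ℝ}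
    (hdist : ∀ k, (ℙ : Measure Ω).map (X k) = volume.restrict (closedBall 0 r))
    (hh : 0 ≤ h) (hhr : h ≤ r) :
    ((n * (n - 1) : ℕ) : ℝ≥0∞) * (ENNReal.ofReal ((r - h) * √(r ^ 2 - h ^ 2) / 32) ^ 2 *
        volume (closedBall 0 r \ cap r h) ^ (n - 2)) ≤
      ℙ {ω | ∃ i j : Fin n, i ≠ j ∧ IsDelaunayEdge (range fun k => X k ω) (X i ω) (X j ω) ∧
        √(r ^ 2 - h ^ 2) ≤ dist (X i ω) (X j ω)} := by
  rcases hhr.eq_or_lt with rfl | hhr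
  · simp
  set W := √(r ^ 2 - h ^ 2)
  set u := (r - h) / 16
  have hr : 0 ≤ r := hh.trans hhr.le
  have hW : W ^ 2 = r ^ 2 - h ^ 2 := sq_sqrt (by nlinarith)
  have hW₀ : 0 < W := sqrt_pos.2 (by nlinarith)
  have hu : 0 < u := by simp only [u]; linarith
  have hgap : 7 * u * (h + 7 * u) ≤ W ^ 2 := by simp only [u]; nlinarith
  have hcorner : (h + 7 * u) ^ 2 + (3 * W / 4) ^ 2 ≤ r ^ 2 := by
    simp only [u]; nlinarith [sq_nonneg (r - h)]
  set A := coordRect (Icc (h + 5 * u) (h + 7 * u)) (Icc (-(3 * W / 4)) (-(W / 2)))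
  set B := coordRect (Icc (h + 5 * u) (h + 7 * u)) (Icc (W / 2) (3 * W / 4))
  have hA : A ⊆ cap r h := coordRect_subset_cap hr hh (by linarith) le_rfl (by linarith) hcorner
  have hB : B ⊆ cap r h := coordRect_subset_cap hr hh (by linarith) (by linarith) le_rfl hcorner
  have hν {R : Set ℝ²} (hR : R ⊆ closedBall 0 r) :
      volume.restrict (closedBall 0 r) R = volume R := by
    rw [Measure.restrict_apply' measurableSet_closedBall, inter_eq_left.2 hR]
  have hvolA : volume A = ENNReal.ofReal ((r - h) * W / 32) := by
    rw [volume_coordRect_Icc (by linarith)]; congr 1; simp only [u]; ring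
  have hvolB : volume B = ENNReal.ofReal ((r - h) * W / 32) := by
    rw [volume_coordRect_Icc (by linarith)]; congr 1; simp only [u]; ring
  refine Eq.trans_le ?_ (card_offDiag_mul_le_measure hX hmeas hdist
    (measurableSet_coordRect measurableSet_Icc measurableSet_Icc)
    (measurableSet_coordRect measurableSet_Icc measurableSet_Icc)
    (measurableSet_closedBall.diff (measurableSet_cap r h))
    (Set.disjoint_left.2 fun p hpA hpB => by linarith [hpA.2.2, hpB.2.1])
    (disjoint_sdiff_right.mono_left hA) (disjoint_sdiff_right.mono_left hB)
    fun i j hij ω hω => ⟨i, j, hij, isDelaunayEdge_range_of_mem_placement hh hu hW₀ hgap hij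
      (by simpa only [mem_iInter, mem_preimage] using hω)⟩)
  rw [hν (hA.trans fun p hp => hp.1), hν (hB.trans fun p hp => hp.1), hν sdiff_subset,
    hvolA, hvolB, sq]

def delaunayConst : ℝ := (1 - exp (-(1 / 16))) * (1 - exp (-(1 / 32))) * exp (-1)

lemma one_sub_exp_neg_pos {x : ℝ} (hx : 0 < x) : 0 < 1 - exp (-x) :=
  sub_pos.2 (exp_lt_one_iff.2 (neg_neg_iff_pos.2 hx))

lemma delaunayConst_pos : 0 < delaunayConst := by
  have := one_sub_exp_neg_pos (x := 1 / 16) (by norm_num)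
  have := one_sub_exp_neg_pos (x := 1 / 32) (by norm_num)
  unfold delaunayConst
  positivity

lemma delaunayConst_le : delaunayConst ≤ 1 / 1280 := by
  have h16 : 1 - exp (-(1 / 16)) ≤ 1 / 16 := by linarith [add_one_le_exp (-(1 / 16))]
  have h32 : 1 - exp (-(1 / 32)) ≤ 1 / 32 := by linarith [add_one_le_exp (-(1 / 32))]
  have h32₀ := one_sub_exp_neg_pos (x := 1 / 32) (by norm_num)
  have he : exp (-1) ≤ 2 / 5 := by
    rw [exp_neg, inv_le_comm₀ (exp_pos 1) (by norm_num)]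
    linarith [exp_one_gt_d9]
  calc delaunayConst ≤ 1 / 16 * (1 / 32) * (2 / 5) := by unfold delaunayConst; gcongr
    _ = 1 / 1280 := by norm_num

lemma exp_neg_le_one_sub_div_pow (m : ℕ) {t : ℝ} (ht : 0 ≤ t) :
    exp (-t) ≤ (1 - t / (m + t)) ^ m := by
  rcases m.eq_zero_or_pos with rfl | hm
  · simpa using ht
  have hm' : (0 : ℝ) < m := Nat.cast_pos.2 hm
  have hbase : exp (-(t / m)) ≤ 1 - t / (m + t) := by
    rw [exp_neg, show 1 - t / (m + t) = (t / m + 1)⁻¹ by field_simp; ring]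
    exact inv_anti₀ (by positivity) (add_one_le_exp _)
  calc exp (-t) = exp (-(t / m)) ^ m := by rw [← exp_nat_mul]; field_simp
    _ ≤ _ := pow_le_pow_left₀ (exp_pos _).le hbase m

lemma two_le_log_div {α ε : ℝ} (hε : 0 < ε) (hεα : ε ≤ α / exp 1 ^ 2) : 2 ≤ log (α / ε) := by
  have hα : ε * exp 1 ^ 2 ≤ α := (le_div_iff₀ (by positivity)).1 hεα
  rw [le_log_iff_exp_le (div_pos ((by positivity : 0 < ε * exp 1 ^ 2).trans_le hα) hε),
    le_div_iff₀ hε, show (2 : ℝ) = 1 + 1 by norm_num, exp_add, ← sq]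
  linarith

lemma mul_exp_neg_le_pairs_mul_pow {n : ℕ} {α t L : ℝ} (hn : 2 < n) (hα₀ : 0 ≤ α)
    (hα : α ≤ 1 / 1280) (ht : 2 ≤ t) (hL : L = t / (n - 2 + t)) (hsmall : L ≤ 1 / 2 - 1 / n) :
    α * exp (-t) ≤ ((n * (n - 1) : ℕ) : ℝ) * ((L / 64) ^ 2 * (1 - L) ^ (n - 2)) := by
  have hn' : (2 : ℝ) < n := by exact_mod_cast hn
  have hLn : 2 / n ≤ L := by
    rw [hL, div_le_div_iff₀ (by linarith) (by linarith)]
    nlinarith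
  have hn6 : (6 : ℝ) ≤ n := by
    have : 3 / (n : ℝ) ≤ 1 / 2 := by linarith [show 3 / (n : ℝ) = 2 / n + 1 / n by ring]
    rw [div_le_div_iff₀ (by linarith) (by norm_num)] at this
    linarith
  -- `n (n - 1) L² ≥ 4 (n - 1) / n ≥ 10 / 3 > 4096 / 1280`
  have hpairs : 4096 * α ≤ n * (n - 1) * L ^ 2 := by
    have hL2 : (2 / n) ^ 2 ≤ L ^ 2 := pow_le_pow_left₀ (by positivity) hLn 2
    have h4 : n * (n - 1) * (2 / n : ℝ) ^ 2 = 4 - 4 / n := by field_simp; ring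
    have h46 : 4 / (n : ℝ) ≤ 4 / 6 := div_le_div_of_nonneg_left (by norm_num) (by norm_num) hn6
    nlinarith [mul_le_mul_of_nonneg_left hL2 (by nlinarith : (0 : ℝ) ≤ n * (n - 1))]
  have hexp : exp (-t) ≤ (1 - L) ^ (n - 2) := by
    have := exp_neg_le_one_sub_div_pow (n - 2) (by linarith : 0 ≤ t)
    rwa [Nat.cast_sub hn.le, Nat.cast_ofNat, ← hL] at this
  have h1L : 0 ≤ 1 - L := by linarith [show 0 < 1 / (n : ℝ) by positivity]
  rw [Nat.cast_mul, Nat.cast_sub (by omega), Nat.cast_one]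
  calc α * exp (-t) ≤ α * (1 - L) ^ (n - 2) := by gcongr
    _ ≤ _ := by
      have := pow_nonneg h1L (n - 2)
      nlinarith

lemma rpow_one_third_le_sqrt {r h L : ℝ} (hr : 0 < r) (hh : 0 ≤ h) (hhr : h ≤ r) (hL₀ : 0 ≤ L)
    (hL : L ≤ (r - h) * (2 * √(r ^ 2 - h ^ 2))) :
    (L * r / 2) ^ ((1 : ℝ) / 3) ≤ √(r ^ 2 - h ^ 2) := by
  set W := √(r ^ 2 - h ^ 2)
  have hW : W ^ 2 = r ^ 2 - h ^ 2 := sq_sqrt (by nlinarith)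
  have hW₀ : 0 ≤ W := sqrt_nonneg _
  -- `L r / 2 ≤ (r - h) r W ≤ (r - h) (r + h) W = W³`
  have hcube : L * r / 2 ≤ W ^ 3 := by nlinarith [mul_nonneg (sub_nonneg.2 hhr) hh]
  calc (L * r / 2) ^ ((1 : ℝ) / 3) ≤ (W ^ 3) ^ ((1 : ℝ) / 3) := by gcongr
    _ = W := by
      rw [one_div, show (3 : ℝ) = (3 : ℕ) by norm_num, pow_rpow_inv_natCast hW₀ (by norm_num)]

theorem delaunay_disk_lower_bound_explicit_general
    (n : ℕ) (hn : 2 < n)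
    {Ω : Type} [MeasureSpace Ω]
    -- the points `X 0, …, X (n-1)` are i.i.d., uniform in the unit disk
    (X : Fin n → Ω → EuclideanSpace ℝ (Fin 2))
    (hmeas : ∀ i, Measurable (X i))
    (hindep : iIndepFun X ℙ)
    (hdist : ∀ i, Measure.map (X i) ℙ =
      volume.restrict (Metric.closedBall (0 : EuclideanSpace ℝ (Fin 2)) (1 / Real.sqrt π)))
    (α ε L ρ₁ : ℝ)
    (hα : α = (1 - Real.exp (-(1 / 16 : ℝ))) * (1 - Real.exp (-(1 / 32 : ℝ))) * Real.exp (-1))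
    (hε0 : 0 < ε) (hε1 : ε ≤ α / Real.exp 1 ^ 2)
    (hL : L = Real.log (α / ε) / ((n : ℝ) - 2 + Real.log (α / ε)))
    (hρ₁ : ballCapVol 2 (1 / Real.sqrt π) ρ₁ = L)
    (hsmall : ballCapVol 2 (1 / Real.sqrt π) ρ₁ ≤ 1 / 2 - 1 / (n : ℝ)) :
    ENNReal.ofReal ε ≤
      ℙ {ω | ∃ i j : Fin n, i ≠ j ∧
        IsDelaunayEdge (Set.range fun k => X k ω) (X i ω) (X j ω) ∧
        (L / (2 * Real.sqrt π)) ^ ((1 : ℝ) / 3) ≤ dist (X i ω) (X j ω)} := by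
  set r := 1 / √π with hr_def
  set h := √(r ^ 2 - ρ₁ ^ 2 / 4)
  set t := log (α / ε)
  have hr : 0 < r := by positivity
  have hh : 0 ≤ h := sqrt_nonneg _
  have hhr : h ≤ r := sqrt_le_iff.2 ⟨hr.le, by nlinarith⟩
  have ht : 2 ≤ t := two_le_log_div hε0 hε1
  have hα₀ : 0 < α := hα ▸ delaunayConst_pos
  have hL₀ : 0 < L :=
    hL ▸ div_pos (by linarith) (by linarith [(Nat.ofNat_lt_cast.2 hn : (2 : ℝ) < n)])
  have hcap : (volume (cap r h)).toReal = L := by rw [← hρ₁, ballCapVol_two_eq]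
  have hLW := hcap ▸ toReal_volume_cap_le hh hhr
  have hτ : (L / (2 * √π)) ^ ((1 : ℝ) / 3) ≤ √(r ^ 2 - h ^ 2) := by
    rw [show L / (2 * √π) = L * r / 2 by rw [hr_def]; ring]
    exact rpow_one_third_le_sqrt hr hh hhr hL₀.le hLW
  have hε : ε = α * exp (-t) := by rw [exp_neg, exp_log (div_pos hα₀ hε0)]; field_simp
  calc ENNReal.ofReal ε
      ≤ ENNReal.ofReal (((n * (n - 1) : ℕ) : ℝ) * ((L / 64) ^ 2 * (1 - L) ^ (n - 2))) :=
        ENNReal.ofReal_le_ofReal (hε ▸ mul_exp_neg_le_pairs_mul_pow hn hα₀.le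
          (hα ▸ delaunayConst_le) ht hL (hρ₁ ▸ hsmall))
    _ ≤ ((n * (n - 1) : ℕ) : ℝ≥0∞) * (ENNReal.ofReal ((r - h) * √(r ^ 2 - h ^ 2) / 32) ^ 2 *
          volume (closedBall 0 r \ cap r h) ^ (n - 2)) := by
        rw [volume_closedBall_inv_sqrt_pi_diff_cap, hcap, ENNReal.ofReal_mul (by positivity),
          ENNReal.ofReal_mul (by positivity), ENNReal.ofReal_pow (by positivity),
          ENNReal.ofReal_pow (by linarith [hρ₁ ▸ hsmall, show 0 < 1 / (n : ℝ) by positivity]),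
          ENNReal.ofReal_natCast]
        gcongr _ * (ENNReal.ofReal ?_ ^ 2 * _)
        linarith
    _ ≤ _ := le_measure_exists_delaunayEdge_sqrt_le_dist hmeas hindep hdist hh hhr
    _ ≤ _ := by
        exact measure_mono fun ω ⟨i, j, hij, hedge, hW⟩ => ⟨i, j, hij, hedge, hτ.trans hW⟩

theorem delaunay_disk_lower_bound_explicit
    (n : ℕ) (hn : 2 < n)
    {Ω : Type} [MeasureSpace Ω] [IsProbabilityMeasure (ℙ : Measure Ω)]
    -- the points `X 0, …, X (n-1)` are i.i.d., uniform in the unit disk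
    (X : Fin n → Ω → EuclideanSpace ℝ (Fin 2))
    (hmeas : ∀ i, Measurable (X i))
    (hindep : iIndepFun X ℙ)
    (hdist : ∀ i, Measure.map (X i) ℙ =
      volume.restrict (Metric.closedBall (0 : EuclideanSpace ℝ (Fin 2)) (1 / Real.sqrt π)))
    (α ε L ρ₁ : ℝ)
    (hα : α = (1 - Real.exp (-(1 / 16 : ℝ))) * (1 - Real.exp (-(1 / 32 : ℝ))) * Real.exp (-1))
    (hε0 : 0 < ε) (hε1 : ε ≤ α / Real.exp 1 ^ 2)
    (hL : L = Real.log (α / ε) / ((n : ℝ) - 2 + Real.log (α / ε)))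
    (hρ₁ : ballCapVol 2 (1 / Real.sqrt π) ρ₁ = L)
    (hsmall : ballCapVol 2 (1 / Real.sqrt π) ρ₁ ≤ 1 / 2 - 1 / (n : ℝ)) :
    ENNReal.ofReal ε ≤
      ℙ {ω | ∃ i j : Fin n, i ≠ j ∧
        IsDelaunayEdge (Set.range fun k => X k ω) (X i ω) (X j ω) ∧
        (L / (2 * Real.sqrt π)) ^ ((1 : ℝ) / 3) ≤ dist (X i ω) (X j ω)} :=
  delaunay_disk_lower_bound_explicit_general n hn X hmeas hindep hdist α ε L ρ₁ hα hε0 hε1 hL hρ₁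
    hsmall
end
end

section
/- For every 0 < ρ ≤ 2/√π, the area V₂(ρ) of the circular segment of the unit disk whose base chord has length ρ satisfies ρ/2 ≥ ( V₂(ρ) / (2√π) )^{1/3}. -/
/-!
The segment cut off at distance `h = √(R² - ρ²/4)` from the centre lies in the rectangle
`[h, R] × [-ρ/2, ρ/2]` (in `ℝ^m`, in a box with `m - 1` sides of length `ρ`), and
`R - h = (ρ²/4) / (R + h) ≤ ρ² / (4R)`. Hence `V₂(ρ) ≤ ρ³ / (4R) = 2√π (ρ/2)³` for `R = 1/√π`.
-/

noncomputable section

open MeasureTheory Real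

local notation "⟪" x ", " y "⟫" => @inner ℝ _ _ x y

open Function

theorem sqrt_sq_sub_le {R a : ℝ} (hR : 0 ≤ R) (ha : 0 ≤ a) : √(R ^ 2 - a) ≤ R :=
  calc √(R ^ 2 - a) ≤ √(R ^ 2) := Real.sqrt_le_sqrt (by linarith)
    _ = R := Real.sqrt_sq hR

theorem sub_sqrt_sq_sub_le_div {R a : ℝ} (hR : 0 < R) (ha : 0 ≤ a) :
    R - √(R ^ 2 - a) ≤ a / R := by
  set s := √(R ^ 2 - a)
  have hsR : s ≤ R := sqrt_sq_sub_le hR.le ha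
  have hs : R ^ 2 - a ≤ s ^ 2 := by
    rcases le_total 0 (R ^ 2 - a) with h | h
    · exact (Real.sq_sqrt h).ge
    · exact h.trans (sq_nonneg _)
  rw [le_div_iff₀ hR]
  calc (R - s) * R ≤ (R - s) * (R + s) := by
        gcongr
        exact le_add_of_nonneg_right (Real.sqrt_nonneg _)
    _ = R ^ 2 - s ^ 2 := by ring
    _ ≤ a := by linarith

def ballCap (m : ℕ) [NeZero m] (R x : ℝ) : Set (EuclideanSpace ℝ (Fin m)) :=
  {p | p ∈ Metric.closedBall 0 R ∧
    √(R ^ 2 - x ^ 2 / 4) ≤ ⟪EuclideanSpace.single (0 : Fin m) (1 : ℝ), p⟫}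

section BallCap

variable {m : ℕ} [NeZero m] {R x : ℝ} {p : EuclideanSpace ℝ (Fin m)}

theorem ballCapVol_eq_toReal_volume : ballCapVol m R x = (volume (ballCap m R x)).toReal := rfl

theorem le_apply_zero_of_mem_ballCap (hp : p ∈ ballCap m R x) : √(R ^ 2 - x ^ 2 / 4) ≤ p 0 := by
  simpa [EuclideanSpace.inner_single_left] using hp.2

theorem apply_le_of_mem_ballCap (hp : p ∈ ballCap m R x) (i : Fin m) : p i ≤ R :=
  calc p i ≤ ‖p i‖ := Real.le_norm_self _
    _ ≤ ‖p‖ := PiLp.norm_apply_le p i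
    _ ≤ R := mem_closedBall_zero_iff.mp hp.1

theorem abs_apply_le_of_mem_ballCap (hx : 0 ≤ x) (hp : p ∈ ballCap m R x) {i : Fin m}
    (hi : i ≠ 0) : |p i| ≤ x / 2 := by
  have hpair : p 0 ^ 2 + p i ^ 2 ≤ R ^ 2 :=
    calc p 0 ^ 2 + p i ^ 2 = ∑ j ∈ {0, i}, p j ^ 2 := by rw [Finset.sum_pair hi.symm]
      _ ≤ ∑ j, p j ^ 2 := Finset.sum_le_sum_of_subset_of_nonneg (Finset.subset_univ _)
          fun j _ _ => sq_nonneg (p j)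
      _ = ‖p‖ ^ 2 := by simp [EuclideanSpace.real_norm_sq_eq]
      _ ≤ R ^ 2 := by gcongr; exact mem_closedBall_zero_iff.mp hp.1
  have h0 : R ^ 2 - x ^ 2 / 4 ≤ p 0 ^ 2 := by
    have hh := le_apply_zero_of_mem_ballCap hp
    rcases le_total 0 (R ^ 2 - x ^ 2 / 4) with h | h
    · nlinarith [Real.sq_sqrt h, Real.sqrt_nonneg (R ^ 2 - x ^ 2 / 4)]
    · exact h.trans (sq_nonneg _)
  exact abs_le_of_sq_le_sq (by nlinarith) (by positivity)

theorem ballCap_subset_preimage_Icc (hx : 0 ≤ x) :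
    ballCap m R x ⊆ WithLp.ofLp ⁻¹' Set.Icc
      (update (fun _ => -(x / 2)) 0 √(R ^ 2 - x ^ 2 / 4)) (update (fun _ => x / 2) 0 R) := by
  intro p hp
  refine ⟨fun i => ?_, fun i => ?_⟩ <;> rcases eq_or_ne i 0 with rfl | hi
  · simpa using le_apply_zero_of_mem_ballCap hp
  · simpa [hi] using (abs_le.mp (abs_apply_le_of_mem_ballCap hx hp hi)).1
  · simpa using apply_le_of_mem_ballCap hp 0
  · simpa [hi] using (abs_le.mp (abs_apply_le_of_mem_ballCap hx hp hi)).2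

theorem ballCapVol_le_mul_pow (hR : 0 ≤ R) (hx : 0 ≤ x) :
    ballCapVol m R x ≤ (R - √(R ^ 2 - x ^ 2 / 4)) * x ^ (m - 1) := by
  set h := √(R ^ 2 - x ^ 2 / 4)
  have hhR : h ≤ R := sqrt_sq_sub_le hR (by positivity)
  set a : Fin m → ℝ := update (fun _ => -(x / 2)) 0 h
  set b : Fin m → ℝ := update (fun _ => x / 2) 0 R
  have hab : a ≤ b := by
    intro i
    rcases eq_or_ne i 0 with rfl | hi
    · simpa [a, b] using hhR
    · simp only [a, b, update_of_ne hi, neg_le_self_iff]; positivity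
  have hba : b - a = update (fun _ => x) 0 (R - h) := by
    funext i
    rcases eq_or_ne i 0 with rfl | hi
    · simp [a, b]
    · simp [a, b, hi]
  have hvol : volume (WithLp.ofLp ⁻¹' Set.Icc a b : Set (EuclideanSpace ℝ (Fin m))) =
      volume (Set.Icc a b) :=
    (PiLp.volume_preserving_ofLp _).measure_preimage measurableSet_Icc.nullMeasurableSet
  calc ballCapVol m R x ≤ (volume (Set.Icc a b)).toReal := by
        rw [ballCapVol_eq_toReal_volume, ← hvol]
        exact ENNReal.toReal_mono (hvol ▸ isCompact_Icc.measure_ne_top)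
          (measure_mono (ballCap_subset_preimage_Icc hx))
    _ = ∏ i, (b - a) i := volume_Icc_pi_toReal hab
    _ = (R - h) * x ^ (m - 1) := by
        rw [hba, Finset.prod_update_of_mem (Finset.mem_univ 0)]
        simp [Finset.card_univ_sdiff]

theorem ballCapVol_le_pow_div (hR : 0 < R) (hx : 0 ≤ x) :
    ballCapVol m R x ≤ x ^ (m + 1) / (4 * R) :=
  calc ballCapVol m R x ≤ (R - √(R ^ 2 - x ^ 2 / 4)) * x ^ (m - 1) :=
        ballCapVol_le_mul_pow hR.le hx
    _ ≤ x ^ 2 / 4 / R * x ^ (m - 1) := by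
        gcongr; exact sub_sqrt_sq_sub_le_div hR (by positivity)
    _ = x ^ (m + 1) / (4 * R) := by
        rw [show m + 1 = 2 + (m - 1) by have := NeZero.ne m; omega, pow_add]
        ring

end BallCap

theorem chord_ge_cbrt_segment_area_general
    (ρ : ℝ) (hρ0 : 0 < ρ) :
    (ballCapVol 2 (1 / Real.sqrt π) ρ / (2 * Real.sqrt π)) ^ ((1 : ℝ) / 3) ≤ ρ / 2 := by
  have hπ : 0 < √π := Real.sqrt_pos.mpr Real.pi_pos
  have hV : ballCapVol 2 (1 / √π) ρ / (2 * √π) ≤ (ρ / 2) ^ 3 := by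
    rw [div_le_iff₀ (by positivity)]
    calc ballCapVol 2 (1 / √π) ρ ≤ ρ ^ 3 / (4 * (1 / √π)) :=
          ballCapVol_le_pow_div (by positivity) hρ0.le
      _ = (ρ / 2) ^ 3 * (2 * √π) := by field_simp; ring
  have hV0 : 0 ≤ ballCapVol 2 (1 / √π) ρ / (2 * √π) :=
    div_nonneg ENNReal.toReal_nonneg (by positivity)
  rw [one_div (3 : ℝ), Real.rpow_inv_le_iff_of_pos hV0 (by positivity) three_pos]
  exact_mod_cast hV

theorem chord_ge_cbrt_segment_area
    (ρ : ℝ) (hρ0 : 0 < ρ) (hρ1 : ρ ≤ 2 / Real.sqrt π) :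
    (ballCapVol 2 (1 / Real.sqrt π) ρ / (2 * Real.sqrt π)) ^ ((1 : ℝ) / 3) ≤ ρ / 2 :=
  chord_ge_cbrt_segment_area_general ρ hρ0
end
end
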